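/- Let R be a commutative ring and H = R^• its monoid of regular elements. Then the set of regular elements of the complete integral closure of R equals the complete integral closure of the monoid H: (R̂)^• = Ĥ. Consequently, if R is completely integrally closed then so is H; and if R is additionally a v-Marot ring, then R is completely integrally closed if and only if H is. -/

import Mathlib

open scoped Pointwise

/-- For subsets `Z, X` of the total quotient ring `T`, the colon set
`(Z : X) = {a ∈ T | a X ⊆ Z}`. -/
def colonSet (T : Type*) [CommRing T] (Z X : Set T) : Set T :=
  {a : T | ∀ x ∈ X, a * x ∈ Z}

/-- The image of `R` inside its total quotient ring `T`. -/
def ringSet (R T : Type*) [CommRing R] [CommRing T] [Algebra R T] : Set T :=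
  Set.range (algebraMap R T)

/-- `X⁻¹ = (R : X)` for a subset `X ⊆ T`. -/
def invSet (R T : Type*) [CommRing R] [CommRing T] [Algebra R T] (X : Set T) : Set T :=
  colonSet T (ringSet R T) X

/-- The divisorial (v-) closure `X_v = (X⁻¹)⁻¹` of a subset `X ⊆ T`. -/
def vSet (R T : Type*) [CommRing R] [CommRing T] [Algebra R T] (X : Set T) : Set T :=
  invSet R T (invSet R T X)

/-- The set of regular elements (non-zero-divisors) of `T`. -/
def regSet (T : Type*) [CommRing T] : Set T :=
  {t : T | t ∈ nonZeroDivisors T}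

/-- The colon set computed inside `Q = T^• ` : `(Z :_Q X) = {a ∈ Q | a X ⊆ Z}`. -/
def colonQ (T : Type*) [CommRing T] (Z X : Set T) : Set T :=
  {a : T | a ∈ nonZeroDivisors T ∧ ∀ x ∈ X, a * x ∈ Z}

/-- The monoid `H = R^•` of regular elements of `R`, viewed inside `T`. -/
def HSet (R T : Type*) [CommRing R] [CommRing T] [Algebra R T] : Set T :=
  ringSet R T ∩ regSet T

/-- The v-closure of a subset of `Q = T^•` with respect to the monoid `H = R^•`. -/
def vMon (R T : Type*) [CommRing R] [CommRing T] [Algebra R T] (X : Set T) : Set T :=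
  colonQ T (HSet R T) (colonQ T (HSet R T) X)

/-- `X ⊆ T` is `R`-fractional: `cX ⊆ R` for some regular `c ∈ R^•`. -/
def isFrac (R T : Type*) [CommRing R] [CommRing T] [Algebra R T] (X : Set T) : Prop :=
  ∃ c : R, c ∈ nonZeroDivisors R ∧ ∀ x ∈ X, algebraMap R T c * x ∈ ringSet R T

/-- The complete integral closure `R̂` of `R` in `T`. -/
def hatSet (R T : Type*) [CommRing R] [CommRing T] [Algebra R T] : Set T :=
  {x : T | ∃ c : R, c ∈ nonZeroDivisors R ∧
    ∀ n : ℕ, 1 ≤ n → algebraMap R T c * x ^ n ∈ ringSet R T}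

/-- The complete integral closure `Ĥ` of the monoid `H = R^•` in `q(H) = T^•`. -/
def monHat (R T : Type*) [CommRing R] [CommRing T] [Algebra R T] : Set T :=
  {x : T | x ∈ nonZeroDivisors T ∧
    ∃ c ∈ HSet R T, ∀ n : ℕ, 1 ≤ n → c * x ^ n ∈ HSet R T}

/-- `R` is a v-Marot ring: every regular fractional divisorial ideal is
v-generated by its regular elements. -/
def isVMarot (R T : Type*) [CommRing R] [CommRing T] [Algebra R T] : Prop :=
  ∀ I : Set T, (I ∩ regSet T).Nonempty → isFrac R T I → vSet R T I = I →
    I = vSet R T (I ∩ regSet T)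

/-!
A witness `c ∈ R^•` for `x ∈ R̂` also witnesses `x ∈ Ĥ` once `x` is regular, and conversely a
witness in `H` is the image of a regular element of `R`; hence `(R̂)^• = Ĥ`.

For the converse under the v-Marot hypothesis, let `I` be the v-closure of `R[x]`. Then
`c I ⊆ R` and `1 ∈ I`, so `I` is a regular fractional divisorial ideal; it is multiplicatively
closed, so each regular `t ∈ I` has `c tⁿ ∈ R` for all `n`, i.e. `t ∈ Ĥ = H`. The v-Marot
property gives `I = (I ∩ T^•)_v ⊆ H_v ⊆ R_v = R`, hence `x ∈ R`.
-/

open scoped nonZeroDivisors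

lemma IsFractionRing.algebraMap_mem_nonZeroDivisors_iff {R T : Type*} [CommRing R] [CommRing T]
    [Algebra R T] [IsFractionRing R T] {a : R} : algebraMap R T a ∈ T⁰ ↔ a ∈ R⁰ :=
  ⟨mem_nonZeroDivisors_of_injective (IsFractionRing.injective R T),
    fun ha => IsLocalization.nonZeroDivisors_le_comap R⁰ T ha⟩

section VClosure

variable {R T : Type*} [CommRing R] [CommRing T] [Algebra R T]

lemma one_mem_ringSet : (1 : T) ∈ ringSet R T := ⟨1, map_one _⟩

lemma mul_mem_ringSet {a b : T} (ha : a ∈ ringSet R T) (hb : b ∈ ringSet R T) :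
    a * b ∈ ringSet R T := by
  obtain ⟨r, rfl⟩ := ha
  obtain ⟨s, rfl⟩ := hb
  exact ⟨r * s, map_mul _ _ _⟩

lemma subset_vSet (X : Set T) : X ⊆ vSet R T X :=
  fun x hx _ hw => mul_comm x _ ▸ hw x hx

lemma vSet_mono {X Y : Set T} (h : X ⊆ Y) : vSet R T X ⊆ vSet R T Y :=
  fun _ ha _ hw => ha _ fun _ hx => hw _ (h hx)

lemma invSet_vSet (X : Set T) : invSet R T (vSet R T X) = invSet R T X :=
  Set.Subset.antisymm (fun _ ha x hx => ha x (subset_vSet X hx))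
    (fun a ha _ ht => mul_comm a _ ▸ ht a ha)

lemma vSet_vSet (X : Set T) : vSet R T (vSet R T X) = vSet R T X :=
  congrArg (invSet R T) (invSet_vSet X)

lemma invSet_ringSet : invSet R T (ringSet R T) = ringSet R T :=
  Set.Subset.antisymm (fun a ha => mul_one a ▸ ha 1 one_mem_ringSet)
    (fun _ ha _ hx => mul_mem_ringSet ha hx)

lemma vSet_ringSet : vSet R T (ringSet R T) = ringSet R T := by
  rw [vSet, invSet_ringSet, invSet_ringSet]

lemma mul_mem_vSet {X : Set T} (hX : ∀ a ∈ X, ∀ b ∈ X, a * b ∈ X) {u v : T}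
    (hu : u ∈ vSet R T X) (hv : v ∈ vSet R T X) : u * v ∈ vSet R T X := by
  intro w hw
  have hwx : ∀ x ∈ X, w * x ∈ invSet R T X := fun x hx y hy => by
    rw [mul_assoc]
    exact hw _ (hX x hx y hy)
  have huw : u * w ∈ invSet R T X := fun x hx => by
    simpa only [mul_assoc] using hu _ (hwx x hx)
  simpa only [mul_comm, mul_left_comm] using hv _ huw

variable (R) in
def vSubmonoid (M : Submonoid T) : Submonoid T where
  carrier := vSet R T M
  one_mem' := subset_vSet (M : Set T) M.one_mem
  mul_mem' := mul_mem_vSet fun _ ha _ hb => M.mul_mem ha hb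

end VClosure

section CompleteIntegralClosure

variable {R T : Type*} [CommRing R] [CommRing T] [Algebra R T]

variable (R T) in
lemma ringSet_subset_hatSet : ringSet R T ⊆ hatSet R T := by
  rintro _ ⟨r, rfl⟩
  exact ⟨1, one_mem _, fun n _ => ⟨r ^ n, by rw [map_one, one_mul, map_pow]⟩⟩

variable (R T) in
lemma hatSet_inter_regSet_eq_monHat [IsFractionRing R T] :
    hatSet R T ∩ regSet T = monHat R T := by
  refine Set.Subset.antisymm ?_ ?_
  · rintro x ⟨⟨c, hc, hcx⟩, hx⟩
    have hc' : algebraMap R T c ∈ T⁰ := IsFractionRing.algebraMap_mem_nonZeroDivisors_iff.mpr hc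
    exact ⟨hx, _, ⟨⟨c, rfl⟩, hc'⟩, fun n hn => ⟨hcx n hn, mul_mem hc' (pow_mem hx n)⟩⟩
  · rintro x ⟨hx, _, ⟨⟨c, rfl⟩, hc⟩, hcx⟩
    refine ⟨⟨c, IsFractionRing.algebraMap_mem_nonZeroDivisors_iff.mp hc, ?_⟩, hx⟩
    exact fun n hn => (hcx n hn).1

variable (R) in
/-- Stands in for `R[x]`, which has the same v-closure. -/
def monomials (x : T) : Submonoid T where
  carrier := {t | ∃ (r : R) (n : ℕ), t = algebraMap R T r * x ^ n}
  one_mem' := ⟨1, 0, by simp⟩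
  mul_mem' := by
    rintro _ _ ⟨r, m, rfl⟩ ⟨s, n, rfl⟩
    exact ⟨r * s, m + n, by rw [map_mul, pow_add]; ring⟩

lemma mem_monomials_self (x : T) : x ∈ monomials R x := ⟨1, 1, by simp⟩

lemma algebraMap_mem_invSet_monomials {x : T} {c : R}
    (hcx : ∀ n : ℕ, 1 ≤ n → algebraMap R T c * x ^ n ∈ ringSet R T) :
    algebraMap R T c ∈ invSet R T (monomials R x) := by
  rintro _ ⟨r, n, rfl⟩
  rcases Nat.eq_zero_or_pos n with rfl | hn
  · exact ⟨c * r, by simp⟩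
  · obtain ⟨d, hd⟩ := hcx n hn
    exact ⟨r * d, by rw [map_mul, hd]; ring⟩

lemma mem_monHat_of_mem_vSubmonoid [IsFractionRing R T] {M : Submonoid T} {c : R} (hc : c ∈ R⁰)
    (hcM : algebraMap R T c ∈ invSet R T M) {t : T} (ht : t ∈ vSubmonoid R M) (htreg : t ∈ T⁰) :
    t ∈ monHat R T := by
  have hc' : algebraMap R T c ∈ T⁰ := IsFractionRing.algebraMap_mem_nonZeroDivisors_iff.mpr hc
  refine ⟨htreg, _, ⟨⟨c, rfl⟩, hc'⟩, fun n _ => ⟨?_, mul_mem hc' (pow_mem htreg n)⟩⟩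
  rw [← invSet_vSet] at hcM
  exact mul_comm (t ^ n) _ ▸ hcM _ (pow_mem ht n)

lemma hatSet_subset_ringSet [IsFractionRing R T] (hR : isVMarot R T)
    (hH : monHat R T = HSet R T) :
    hatSet R T ⊆ ringSet R T := by
  rintro x ⟨c, hc, hcx⟩
  set I := vSet R T (monomials R x)
  have hcI : algebraMap R T c ∈ invSet R T I := by
    rw [invSet_vSet]
    exact algebraMap_mem_invSet_monomials hcx
  have hIfrac : isFrac R T I := ⟨c, hc, fun t ht => mul_comm t _ ▸ hcI t ht⟩
  have hIreg : I ∩ regSet T ⊆ ringSet R T := fun t ⟨ht, htreg⟩ =>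
    (hH ▸ mem_monHat_of_mem_vSubmonoid hc (algebraMap_mem_invSet_monomials hcx) ht htreg).1
  have hI : I = vSet R T (I ∩ regSet T) :=
    hR I ⟨1, (vSubmonoid R _).one_mem, (one_mem T⁰ : (1 : T) ∈ T⁰)⟩ hIfrac (vSet_vSet _)
  have hIR : I ⊆ ringSet R T := by
    rw [hI, ← vSet_ringSet]
    exact vSet_mono hIreg
  exact hIR (subset_vSet (R := R) _ (mem_monomials_self x))

end CompleteIntegralClosure

theorem stmt15 (R T : Type*) [CommRing R] [CommRing T] [Algebra R T] [IsFractionRing R T] :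
    hatSet R T ∩ regSet T = monHat R T ∧
      (hatSet R T = ringSet R T → monHat R T = HSet R T) ∧
      (isVMarot R T → (hatSet R T = ringSet R T ↔ monHat R T = HSet R T)) := by
  have hreg := hatSet_inter_regSet_eq_monHat R T
  have hcic : hatSet R T = ringSet R T → monHat R T = HSet R T := fun h => by
    rw [← hreg, h]
    rfl
  exact ⟨hreg, hcic, fun hR =>
    ⟨hcic, fun hH => (hatSet_subset_ringSet hR hH).antisymm (ringSet_subset_hatSet R T)⟩⟩
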